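/- Let p ≥ 1 be an integer and z = 4p − 1. Let G be the group presented on z + 1 generators s, c₁, …, c_z (indices in ℤ/zℤ) with relators c_{i+p}⁻¹ · c_{i−1+2p}⁻¹ · s⁻¹ · c_i · c_{i−p} · s⁻¹ for each i ∈ ℤ/zℤ, together with the relator given by the ordered product over i = 1, …, z of c_i · c_{i−p} · c_{i−1+2p} · c_{i+p}. Then in the abelianization of G, the image of s satisfies s^{2z} = 1 and the image of the product c₁c₂⋯c_z satisfies (c₁c₂⋯c_z)⁴ = 1. -/
import Mathlib


namespace CobwebP

/-- The generator `c i` in the free group on the generators `s, c₁, …, c_z`. -/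
def c (z : ℕ) (i : ZMod z) : FreeGroup (Option (ZMod z)) := FreeGroup.of (some i)

/-- The generator `s` in the free group on the generators `s, c₁, …, c_z`. -/
def S (z : ℕ) : FreeGroup (Option (ZMod z)) := FreeGroup.of none

/-- The relators (4.4)–(4.5) of the simplified cobweb group `Cw(2z = 8p − 2)`,
with `z = 4p − 1` and indices taken modulo `z`. -/
def rels (p z : ℕ) : Set (FreeGroup (Option (ZMod z))) :=
  {r | ∃ i : ZMod z,
      r = (c z (i + (p : ZMod z)))⁻¹ * (c z (i - 1 + 2 * (p : ZMod z)))⁻¹ * (S z)⁻¹ *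
            c z i * c z (i - (p : ZMod z)) * (S z)⁻¹} ∪
  {((List.range z).map (fun k =>
      c z ((k + 1 : ℕ) : ZMod z) * c z (((k + 1 : ℕ) : ZMod z) - (p : ZMod z)) *
      c z (((k + 1 : ℕ) : ZMod z) - 1 + 2 * (p : ZMod z)) *
      c z (((k + 1 : ℕ) : ZMod z) + (p : ZMod z)))).prod}

/-- The fundamental group of the cobweb manifold `Cw(2z = 8p − 2)`. -/
def Cw (p z : ℕ) : Type := PresentedGroup (rels p z)

instance (p z : ℕ) : Group (Cw p z) := by unfold Cw; infer_instance

private lemma list_prod_range {M : Type*} [CommMonoid M] (n : ℕ) (f : ℕ → M) :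
    ((List.range n).map f).prod = ∏ i ∈ Finset.range n, f i := by
  rw [Finset.prod_eq_multiset_prod]; rfl

private lemma prod_natCast {M : Type*} [CommMonoid M] {z : ℕ} [NeZero z] (h : ZMod z → M) :
    ∏ k ∈ Finset.range z, h (k : ZMod z) = ∏ j : ZMod z, h j := by
  refine Finset.prod_nbij' (fun k => (k : ZMod z)) (fun j => j.val) ?_ ?_ ?_ ?_ ?_
  · intro a _; exact Finset.mem_univ _
  · intro b _; exact Finset.mem_range.mpr (ZMod.val_lt b)
  · intro a ha; exact ZMod.val_cast_of_lt (Finset.mem_range.mp ha)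
  · intro b _; exact ZMod.natCast_rightInverse b
  · intro a _; rfl

theorem cobweb_abelianization_orders (p : ℕ) (hp : 1 ≤ p) (z : ℕ) (hz : z = 4 * p - 1) :
    (Abelianization.of (PresentedGroup.of (rels := rels p z) none)) ^ (2 * z) = 1 ∧
    (Abelianization.of
        (((List.range z).map (fun k =>
            PresentedGroup.of (rels := rels p z) (some ((k + 1 : ℕ) : ZMod z)))).prod)) ^ 4
      = 1 := by
  haveI : NeZero z := ⟨by omega⟩
  set f : FreeGroup (Option (ZMod z)) →* Abelianization (PresentedGroup (rels p z)) :=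
    (Abelianization.of).comp (PresentedGroup.mk (rels p z)) with hf
  have hrel : ∀ r ∈ rels p z, f r = 1 := by
    intro r hr
    have h1 : PresentedGroup.mk (rels p z) r = 1 :=
      (QuotientGroup.eq_one_iff r).mpr (Subgroup.subset_normalClosure hr)
    show Abelianization.of (PresentedGroup.mk (rels p z) r) = 1
    rw [h1, map_one]
  set C := ∏ j : ZMod z, f (c z j) with hC
  have reidx : ∀ (g : ZMod z → ZMod z) (a : ZMod z), (∀ j, g j = j + a) →
      ∏ j : ZMod z, f (c z (g j)) = C := by
    intro g a hg
    calc ∏ j : ZMod z, f (c z (g j)) = ∏ j : ZMod z, f (c z (j + a)) := by simp only [hg]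
      _ = C := Fintype.prod_equiv (Equiv.addRight a) _ _ (fun i => rfl)
  constructor
  · -- s ^ (2z) = 1
    have hs : ∏ i : ZMod z,
        f ((c z (i + (p : ZMod z)))⁻¹ * (c z (i - 1 + 2 * (p : ZMod z)))⁻¹ * (S z)⁻¹ *
            c z i * c z (i - (p : ZMod z)) * (S z)⁻¹) = 1 :=
      Finset.prod_eq_one (fun i _ => hrel _ (Or.inl ⟨i, rfl⟩))
    simp only [map_mul, map_inv] at hs
    rw [Finset.prod_mul_distrib, Finset.prod_mul_distrib, Finset.prod_mul_distrib,
      Finset.prod_mul_distrib, Finset.prod_mul_distrib, Finset.prod_inv_distrib,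
      Finset.prod_inv_distrib] at hs
    rw [reidx (fun i => i + (p : ZMod z)) (p : ZMod z) (fun j => rfl),
      reidx (fun i => i - 1 + 2 * (p : ZMod z)) (2 * (p : ZMod z) - 1) (fun j => by ring),
      reidx (fun i => i) 0 (fun j => by ring),
      reidx (fun i => i - (p : ZMod z)) (-(p : ZMod z)) (fun j => by ring)] at hs
    rw [Finset.prod_const, Finset.card_univ, ZMod.card] at hs
    have hgoal : (Abelianization.of (PresentedGroup.of (rels := rels p z) none)) = f (S z) := rfl
    rw [hgoal]
    have h2 : f (S z) ^ (2 * z) =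
        f (S z) ^ (2 * z) * (C⁻¹ * C⁻¹ * (f (S z))⁻¹ ^ z * C * C * (f (S z))⁻¹ ^ z) := by
      rw [hs, mul_one]
    rw [h2, two_mul, pow_add, inv_pow]
    simp [mul_comm, mul_left_comm, mul_assoc]
  · -- (c₁ ⋯ c_z) ^ 4 = 1
    have hl := hrel _ (Or.inr rfl)
    rw [map_list_prod, List.map_map, list_prod_range] at hl
    simp only [Function.comp_apply, map_mul, Nat.cast_add, Nat.cast_one] at hl
    rw [prod_natCast (fun j => f (c z (j + 1)) * f (c z (j + 1 - (p : ZMod z))) *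
        f (c z (j + 1 - 1 + 2 * (p : ZMod z))) * f (c z (j + 1 + (p : ZMod z))))] at hl
    rw [Finset.prod_mul_distrib, Finset.prod_mul_distrib, Finset.prod_mul_distrib] at hl
    rw [reidx (fun j => j + 1) 1 (fun j => rfl),
      reidx (fun j => j + 1 - (p : ZMod z)) (1 - (p : ZMod z)) (fun j => by ring),
      reidx (fun j => j + 1 - 1 + 2 * (p : ZMod z)) (2 * (p : ZMod z)) (fun j => by ring),
      reidx (fun j => j + 1 + (p : ZMod z)) (1 + (p : ZMod z)) (fun j => by ring)] at hl
    have hgoal : Abelianization.of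
        (((List.range z).map (fun k =>
            PresentedGroup.of (rels := rels p z) (some ((k + 1 : ℕ) : ZMod z)))).prod)
        = f (((List.range z).map (fun k => c z ((k + 1 : ℕ) : ZMod z))).prod) := by
      rw [map_list_prod, map_list_prod, List.map_map, List.map_map]
      rfl
    rw [hgoal, map_list_prod, List.map_map, list_prod_range]
    simp only [Function.comp_apply, Nat.cast_add, Nat.cast_one]
    rw [prod_natCast (fun j => f (c z (j + 1))), reidx (fun j => j + 1) 1 (fun j => rfl)]
    rw [show C ^ 4 = C * C * C * C by rw [pow_succ, pow_succ, pow_succ, pow_one]]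
    exact hl

end CobwebP
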